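/- arXiv:1902.08581 — 3 statements merged into one kernel-verified Lean document; each statement's English description precedes it below -/
import Mathlib

section
/- Let 0 < ε < 1 and set σ₃ = 3(1 + 3ε) and σ₁ = 3(1 − ε). Suppose real numbers c₃, c₁, b₃, b₁, d₀, d₁ satisfy: 2/3 ≤ c₃ < 1, 0 ≤ c₁, b₃ ≥ σ₃, b₁ ≥ σ₁, d₀ ≤ 3, c₃b₃ ≤ d₀, d₁ ≤ d₀ − c₃b₃, and c₁b₁ ≤ d₁. Then c₃ + c₁ ≤ (3 − 8ε)/(3 − 3ε) < 1. -/
/-- The numerical estimate in Case 5.2 (smooth center, `m₁ = 1`) of Fujita-type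
freeness for terminal threefolds, with `σ₃ = 3(1 + 3ε)` and `σ₁ = 3(1 − ε)`. -/
theorem case_two_smooth_estimate (ε c₃ c₁ b₃ b₁ d₀ d₁ : ℝ)
    (hε0 : 0 < ε) (hε1 : ε < 1)
    (hc₃l : 2/3 ≤ c₃) (hc₃u : c₃ < 1) (hc₁ : 0 ≤ c₁)
    (hb₃ : 3 * (1 + 3*ε) ≤ b₃) (hb₁ : 3 * (1 - ε) ≤ b₁)
    (hd₀ : d₀ ≤ 3) (h1 : c₃ * b₃ ≤ d₀) (h2 : d₁ ≤ d₀ - c₃ * b₃)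
    (h3 : c₁ * b₁ ≤ d₁) :
    c₃ + c₁ ≤ (3 - 8*ε) / (3 - 3*ε) ∧ (3 - 8*ε) / (3 - 3*ε) < 1 := by
  have hden : 0 < 3 - 3*ε := by linarith
  constructor
  · rw [le_div_iff₀ hden]
    nlinarith [mul_nonneg hc₁ (by linarith : (0:ℝ) ≤ b₁ - 3*(1-ε)),
      mul_nonneg (by linarith : (0:ℝ) ≤ c₃ - 2/3) hε0.le,
      mul_le_mul_of_nonneg_left hb₃ (by linarith : (0:ℝ) ≤ c₃)]
  · rw [div_lt_one hden]; linarith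
end

section
/- Let 0 < ε < 1 − 2√2/3 and set σ₃ = 3(1 + 3ε) and σ₂ = 3(1 − ε). Suppose real numbers c₃, c₂, b₃, b₂, d₀ satisfy: 0 < c₃, 0 ≤ c₂, b₃ ≥ σ₃/∛2, b₂ ≥ σ₂/√2, d₀ ≤ 2, c₃b₃ ≤ d₀, and c₂b₂ ≤ d₀ − c₃b₃. Then c₃ + c₂ < 2√2/(3 − 3ε) < 1. -/
/-- The numerical estimate in Case 5.3 with `m₁ = 2` and `m₂ = 2` of Fujita-type
freeness for terminal threefolds, with `σ₃ = 3(1 + 3ε)`, `σ₂ = 3(1 − ε)`,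
`b₃ ≥ σ₃/∛2` and `b₂ ≥ σ₂/√2`. -/
theorem case_three_m2m2_estimate (ε c₃ c₂ b₃ b₂ d₀ : ℝ)
    (hε0 : 0 < ε) (hε1 : ε < 1 - 2 * Real.sqrt 2 / 3)
    (hc₃ : 0 < c₃) (hc₂ : 0 ≤ c₂)
    (hb₃ : 3 * (1 + 3*ε) / (2 : ℝ) ^ ((1 : ℝ)/3) ≤ b₃)
    (hb₂ : 3 * (1 - ε) / Real.sqrt 2 ≤ b₂)
    (hd₀ : d₀ ≤ 2) (h1 : c₃ * b₃ ≤ d₀) (h2 : c₂ * b₂ ≤ d₀ - c₃ * b₃) :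
    c₃ + c₂ < 2 * Real.sqrt 2 / (3 - 3*ε) ∧ 2 * Real.sqrt 2 / (3 - 3*ε) < 1 := by
  have hSpos : 0 < Real.sqrt 2 := Real.sqrt_pos.mpr (by norm_num)
  set S := Real.sqrt 2 with hS
  have hTpos : (0:ℝ) < (2:ℝ) ^ ((1:ℝ)/3) := Real.rpow_pos_of_pos (by norm_num) _
  have hTS : (2:ℝ) ^ ((1:ℝ)/3) < S := by
    rw [hS, Real.sqrt_eq_rpow]
    exact Real.rpow_lt_rpow_left_iff (by norm_num) |>.mpr (by norm_num)
  have hε2 : 0 < 1 - ε := by nlinarith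
  -- b₃ is strictly larger than 3(1-ε)/S
  have hb₃' : 3 * (1 - ε) / S < b₃ := by
    refine lt_of_lt_of_le ?_ hb₃
    rw [div_lt_div_iff₀ hSpos hTpos]
    nlinarith
  have hb₂pos : 0 < b₂ := lt_of_lt_of_le (div_pos (by nlinarith) hSpos) hb₂
  have h2' : c₂ * b₂ ≤ 2 - c₃ * b₃ := by linarith
  have hkey₂ : c₂ * (3 * (1 - ε)) ≤ (2 - c₃ * b₃) * S := by
    have h3 : c₂ * (3 * (1 - ε) / S) ≤ c₂ * b₂ := mul_le_mul_of_nonneg_left hb₂ hc₂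
    have h4 : c₂ * (3 * (1 - ε) / S) * S = c₂ * (3 * (1 - ε)) := by
      field_simp
    nlinarith [mul_le_mul_of_nonneg_right (h3.trans h2') hSpos.le]
  have hkey₃ : c₃ * (3 * (1 - ε)) < c₃ * b₃ * S := by
    have h5 : 3 * (1 - ε) < b₃ * S := by
      rw [div_lt_iff₀ hSpos] at hb₃'
      linarith
    nlinarith
  constructor
  · rw [lt_div_iff₀ (by linarith : (0:ℝ) < 3 - 3*ε)]
    nlinarith
  · rw [div_lt_one (by linarith : (0:ℝ) < 3 - 3*ε)]
    linarith
end

section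
/- Let 0 < ε < 1 and set σ₃ = 3(1 + 3ε) and σ₂ = σ₁ = 3(1 − ε). Suppose real numbers c₃, c₂, c₁, b₃, b₂, b₁ satisfy: 1/3 ≤ c₃ < 1, 0 ≤ c₂, 0 ≤ c₁, b₃ ≥ σ₃, b₂ ≥ σ₂, b₁ ≥ σ₁, c₃b₃ + c₂b₂ ≤ 3, and c₁b₁ ≤ 3 − c₃b₃ − c₂b₂. Then c₃ + c₂ + c₁ ≤ (3 − 4ε)/(3 − 3ε) < 1. -/
/-- The numerical estimate in Case 5.4 (`m₁ = 1`, `m₂ = 1`) of Fujita-type freeness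
for terminal threefolds, with `σ₃ = 3(1 + 3ε)` and `σ₂ = σ₁ = 3(1 − ε)`. -/
theorem case_four_m1m1_estimate (ε c₃ c₂ c₁ b₃ b₂ b₁ : ℝ)
    (hε0 : 0 < ε) (hε1 : ε < 1)
    (hc₃l : 1/3 ≤ c₃) (hc₃u : c₃ < 1) (hc₂ : 0 ≤ c₂) (hc₁ : 0 ≤ c₁)
    (hb₃ : 3 * (1 + 3*ε) ≤ b₃) (hb₂ : 3 * (1 - ε) ≤ b₂) (hb₁ : 3 * (1 - ε) ≤ b₁)
    (h1 : c₃ * b₃ + c₂ * b₂ ≤ 3) (h2 : c₁ * b₁ ≤ 3 - c₃ * b₃ - c₂ * b₂) :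
    c₃ + c₂ + c₁ ≤ (3 - 4*ε) / (3 - 3*ε) ∧ (3 - 4*ε) / (3 - 3*ε) < 1 := by
  have hden : (0:ℝ) < 3 - 3*ε := by linarith
  have hc₃0 : (0:ℝ) ≤ c₃ := by linarith
  have k3 : 3 * (1 + 3*ε) * c₃ ≤ c₃ * b₃ :=
    by nlinarith [mul_le_mul_of_nonneg_left hb₃ hc₃0]
  have k2 : 3 * (1 - ε) * c₂ ≤ c₂ * b₂ :=
    by nlinarith [mul_le_mul_of_nonneg_left hb₂ hc₂]
  have k1 : 3 * (1 - ε) * c₁ ≤ c₁ * b₁ :=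
    by nlinarith [mul_le_mul_of_nonneg_left hb₁ hc₁]
  constructor
  · rw [le_div_iff₀ hden]
    nlinarith
  · rw [div_lt_one hden]
    linarith
end
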